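/- Let n be a squarefree positive integer and let G be a finite (additive) abelian group. Then there exists a surjective group homomorphism G →+ ZMod n if and only if n divides the order of G. -/

import Mathlib

/-!
Lagrange gives one direction. Conversely, for a prime `p ∣ |G|` Cauchy's theorem yields an
element of order `p`, so `x ↦ p • x` is not injective, hence not surjective on the finite group
`G`; the nonzero `𝔽_p`-vector space `G ⧸ pG` then has a surjective functional. For squarefree
`n = p₁ ⋯ p_k` these surjections assemble, via the Chinese remainder theorem, to a surjection
`G → ℤ/p₁ × ⋯ × ℤ/p_k ≃ ℤ/n`.
-/

open Function

lemma exists_surjective_linearMap_of_nontrivial (K V : Type*) [Field K] [AddCommGroup V]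
    [Module K V] [Nontrivial V] : ∃ f : V →ₗ[K] K, Surjective f := by
  obtain ⟨x, hx⟩ := exists_ne (0 : V)
  obtain ⟨f, hfx⟩ := Module.Projective.exists_dual_eq_one K hx
  exact ⟨f, fun c => ⟨c • x, by simp [hfx]⟩⟩

lemma nsmulAddMonoidHom_range_ne_top_of_prime_dvd_card {G : Type*} [AddCommGroup G] [Finite G]
    (p : ℕ) [Fact p.Prime] (hp : p ∣ Nat.card G) : (nsmulAddMonoidHom p : G →+ G).range ≠ ⊤ := by
  obtain ⟨g, hg⟩ := exists_prime_addOrderOf_dvd_card' p hp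
  have hg0 : g ≠ 0 := by
    rintro rfl
    exact (Fact.out : p.Prime).ne_one (hg.symm.trans addOrderOf_zero)
  have hker : nsmulAddMonoidHom p g = nsmulAddMonoidHom p (0 : G) := by
    simp [← hg, addOrderOf_nsmul_eq_zero]
  rw [Ne, AddMonoidHom.range_eq_top, ← Finite.injective_iff_surjective]
  exact fun hinj => hg0 (hinj hker)

lemma exists_surjective_addHom_zmod_of_prime_dvd_card {G : Type*} [AddCommGroup G] [Finite G]
    {p : ℕ} (hp : p.Prime) (hdvd : p ∣ Nat.card G) : ∃ f : G →+ ZMod p, Surjective f := by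
  have := Fact.mk hp
  let H := (nsmulAddMonoidHom p : G →+ G).range
  let _ : Module (ZMod p) (G ⧸ H) := QuotientAddGroup.zmodModule fun x => ⟨x, rfl⟩
  have : Nontrivial (G ⧸ H) :=
    QuotientAddGroup.nontrivial_iff.mpr (nsmulAddMonoidHom_range_ne_top_of_prime_dvd_card p hdvd)
  obtain ⟨f, hf⟩ := exists_surjective_linearMap_of_nontrivial (ZMod p) (G ⧸ H)
  exact ⟨f.toAddMonoidHom.comp (QuotientAddGroup.mk' H),
    hf.comp (QuotientAddGroup.mk'_surjective H)⟩

lemma AddMonoidHom.prod_surjective_of_coprime {G : Type*} [AddCommGroup G] {a b : ℕ}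
    (hab : a.Coprime b) {f : G →+ ZMod a} {g : G →+ ZMod b} (hf : Surjective f)
    (hg : Surjective g) : Surjective (f.prod g) := by
  obtain ⟨u, v, huv⟩ := Nat.isCoprime_iff_coprime.mpr hab
  rintro ⟨x, y⟩
  obtain ⟨s, rfl⟩ := hf x
  obtain ⟨t, rfl⟩ := hg y
  -- with `u * a + v * b = 1`, `(v * b) • s` maps to `(f s, 0)` and `(u * a) • t` to `(0, g t)`
  refine ⟨(v * b) • s + (u * a) • t, Prod.ext ?_ ?_⟩
  · have : ((v * b : ℤ) : ZMod a) = 1 := by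
      simpa using congrArg (Int.cast : ℤ → ZMod a) huv
    simp [zsmul_eq_mul, this]
  · have : ((u * a : ℤ) : ZMod b) = 1 := by
      simpa using congrArg (Int.cast : ℤ → ZMod b) huv
    simp [zsmul_eq_mul, this]

lemma exists_surjective_addHom_zmod_mul {G : Type*} [AddCommGroup G] {a b : ℕ}
    (hab : a.Coprime b) (ha : ∃ f : G →+ ZMod a, Surjective f)
    (hb : ∃ g : G →+ ZMod b, Surjective g) : ∃ h : G →+ ZMod (a * b), Surjective h := by
  obtain ⟨f, hf⟩ := ha
  obtain ⟨g, hg⟩ := hb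
  let e := (ZMod.chineseRemainder hab).symm
  exact ⟨e.toAddMonoidHom.comp (f.prod g),
    e.surjective.comp (f.prod_surjective_of_coprime hab hf hg)⟩

lemma exists_surjective_addHom_zmod_prod {G : Type*} [AddCommGroup G] {s : Finset ℕ}
    (hs : (s : Set ℕ).Pairwise Nat.Coprime) (h : ∀ m ∈ s, ∃ f : G →+ ZMod m, Surjective f) :
    ∃ f : G →+ ZMod (∏ m ∈ s, m), Surjective f := by
  induction s using Finset.induction_on with
  | empty =>
    rw [Finset.prod_empty]
    exact ⟨0, fun _ => ⟨0, Subsingleton.elim _ _⟩⟩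
  | insert m s hm ih =>
    rw [Finset.coe_insert, Set.pairwise_insert_of_symm] at hs
    rw [Finset.prod_insert hm]
    refine exists_surjective_addHom_zmod_mul ?_ (h m (Finset.mem_insert_self m s))
      (ih hs.1 fun k hk => h k (Finset.mem_insert_of_mem hk))
    exact Nat.Coprime.prod_right fun k hk => hs.2 k hk (ne_of_mem_of_not_mem hk hm).symm

theorem exists_surjective_addHom_zmod_iff_dvd_card_general
    (n : ℕ) (hn : Squarefree n)
    (G : Type*) [AddCommGroup G] [Finite G] :
    (∃ f : G →+ ZMod n, Function.Surjective f) ↔ n ∣ Nat.card G := by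
  refine ⟨fun ⟨f, hf⟩ => by simpa using AddSubgroup.card_dvd_of_surjective f hf, fun hdvd => ?_⟩
  rw [← Nat.prod_primeFactors_of_squarefree hn]
  refine exists_surjective_addHom_zmod_prod ?_ fun p hp =>
    exists_surjective_addHom_zmod_of_prime_dvd_card (Nat.prime_of_mem_primeFactors hp)
      ((Nat.dvd_of_mem_primeFactors hp).trans hdvd)
  exact fun p hp q hq hpq => (Nat.coprime_primes (Nat.prime_of_mem_primeFactors hp)
    (Nat.prime_of_mem_primeFactors hq)).mpr hpq

/-- Let `n` be a squarefree positive integer and `G` a finite abelian (additive) group.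
There exists a surjective group homomorphism `G →+ ZMod n` iff `n` divides `|G|`. -/
theorem exists_surjective_addHom_zmod_iff_dvd_card
    (n : ℕ) (hn : Squarefree n) (hpos : 0 < n)
    (G : Type*) [AddCommGroup G] [Finite G] :
    (∃ f : G →+ ZMod n, Function.Surjective f) ↔ n ∣ Nat.card G :=
  exists_surjective_addHom_zmod_iff_dvd_card_general n hn G
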